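/- arXiv:2412.06663 — 2 statements merged into one kernel-verified Lean document; each statement's English description precedes it below -/
import Mathlib

section
/- Assume P is transitive and irreflexive. Then the Strong Supplementation Principle holds if and only if every mereological sum is a supremum: ∀ S x, Sum x S → Sup x S. -/
/-! If a sum `x` of `S` were not below some upper bound `u` of `S`, strong supplementation would
give a part of `x` exterior to `u`; but, `x` being a sum, that part overlaps some `s ∈ S`, which
lies below `u`. Conversely, if no part of `x` is exterior to `y`, then `x` is the sum of its common
ingredients with `y`; as a supremum of that set, `x` lies below its upper bound `y`. -/

variable {U : Type*}

/-- `x` is an ingrediens of `y`. -/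
def Ing (P : U → U → Prop) (x y : U) : Prop := x = y ∨ P x y

/-- `x` and `y` overlap. -/
def Ov (P : U → U → Prop) (x y : U) : Prop := ∃ z, Ing P z x ∧ Ing P z y

/-- `x` is exterior to `y`. -/
def MExt (P : U → U → Prop) (x y : U) : Prop := ¬ Ov P x y

/-- `x` is a mereological sum of all elements of `S`. -/
def MSum (P : U → U → Prop) (x : U) (S : Set U) : Prop :=
  (∀ s ∈ S, Ing P s x) ∧ ∀ u, Ing P u x → ∃ s ∈ S, Ov P s u

/-- `x` is a supremum (least upper bound) of `S`. -/
def MSup (P : U → U → Prop) (x : U) (S : Set U) : Prop :=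
  (∀ s ∈ S, Ing P s x) ∧ ∀ u, (∀ s ∈ S, Ing P s u) → Ing P x u

/-- `x` and `y` cross (properly overlap). -/
def POv (P : U → U → Prop) (x y : U) : Prop :=
  x ≠ y ∧ ¬ P x y ∧ ¬ P y x ∧ ∃ z, P z x ∧ P z y

def StrongSupplementation (P : U → U → Prop) : Prop :=
  ∀ x y, ¬ Ing P x y → ∃ z, Ing P z x ∧ MExt P z y

theorem Ov.symm {P : U → U → Prop} {x y : U} (h : Ov P x y) : Ov P y x :=
  let ⟨z, hzx, hzy⟩ := h
  ⟨z, hzy, hzx⟩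

section Transitive

variable {P : U → U → Prop}

theorem Ing.trans (htrans : ∀ x y z, P x y → P y z → P x z) {x y z : U} :
    Ing P x y → Ing P y z → Ing P x z := by
  rintro (rfl | hxy) (rfl | hyz)
  · exact Or.inl rfl
  · exact Or.inr hyz
  · exact Or.inr hxy
  · exact Or.inr (htrans _ _ _ hxy hyz)

theorem Ov.mono_right (htrans : ∀ x y z, P x y → P y z → P x z) {x y z : U}
    (hxy : Ov P x y) (hyz : Ing P y z) : Ov P x z :=
  let ⟨w, hwx, hwy⟩ := hxy
  ⟨w, hwx, Ing.trans htrans hwy hyz⟩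

theorem MSum.msup_of_strongSupplementation (htrans : ∀ x y z, P x y → P y z → P x z)
    (hssp : StrongSupplementation P) {x : U} {S : Set U} (hsum : MSum P x S) : MSup P x S := by
  refine ⟨hsum.1, fun u hu => ?_⟩
  by_contra hxu
  obtain ⟨z, hzx, hzu⟩ := hssp x u hxu
  obtain ⟨s, hs, hsz⟩ := hsum.2 z hzx
  exact hzu (Ov.mono_right htrans (Ov.symm hsz) (hu s hs))

theorem msum_inter_of_forall_ov (htrans : ∀ x y z, P x y → P y z → P x z) {x y : U}
    (hov : ∀ z, Ing P z x → Ov P z y) :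
    MSum P x {z | Ing P z x ∧ Ing P z y} := by
  refine ⟨fun s hs => hs.1, fun u hux => ?_⟩
  obtain ⟨w, hwu, hwy⟩ := hov u hux
  exact ⟨w, ⟨Ing.trans htrans hwu hux, hwy⟩, w, Or.inl rfl, hwu⟩

theorem strongSupplementation_of_msum_msup (htrans : ∀ x y z, P x y → P y z → P x z)
    (hsup : ∀ (S : Set U) (x : U), MSum P x S → MSup P x S) :
    StrongSupplementation P := by
  intro x y hxy
  by_contra! hno_ext
  have hov : ∀ z, Ing P z x → Ov P z y := fun z hzx => not_not.mp (hno_ext z hzx)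
  exact hxy ((hsup _ x (msum_inter_of_forall_ov htrans hov)).2 y fun _ hs => hs.2)

end Transitive

theorem stmt_12_general (P : U → U → Prop)
    (htrans : ∀ x y z, P x y → P y z → P x z) :
    (∀ x y, ¬ Ing P x y → ∃ z, Ing P z x ∧ MExt P z y) ↔
      (∀ (S : Set U) (x : U), MSum P x S → MSup P x S) :=
  ⟨fun hssp _ _ => MSum.msup_of_strongSupplementation htrans hssp,
    strongSupplementation_of_msum_msup htrans⟩

theorem stmt_12 (P : U → U → Prop)
    (htrans : ∀ x y z, P x y → P y z → P x z)
    (hirr : ∀ x, ¬ P x x) :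
    (∀ x y, ¬ Ing P x y → ∃ z, Ing P z x ∧ MExt P z y) ↔
      (∀ (S : Set U) (x : U), MSum P x S → MSup P x S) :=
  stmt_12_general P htrans
end

section
/- Assume P is transitive, satisfies the Weak Supplementation Principle, and satisfies the conditional product axiom: ∀ x y, Ov x y → ∃ z, ∀ u, (Ing u z ↔ (Ing u x ∧ Ing u y)). Then the Strong Supplementation Principle holds (SSP is a thesis of Minimal Extensional Mereology). -/
/-! If `x` and `y` do not overlap, `x` itself is exterior to `y`. Otherwise their product `w` is
a proper part of `x` (as `x` is not an ingrediens of `y`), and weak supplementation gives a part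
of `x` exterior to `w`; by transitivity it is then exterior to `y` as well. -/

variable {U : Type*}

theorem Ing.refl (P : U → U → Prop) (x : U) : Ing P x x := Or.inl rfl

theorem Ing.trans_part {P : U → U → Prop} (htrans : ∀ x y z, P x y → P y z → P x z)
    {u z x : U} (huz : Ing P u z) (hzx : P z x) : Ing P u x := by
  rcases huz with rfl | hPuz
  · exact Or.inr hzx
  · exact Or.inr (htrans u z x hPuz hzx)

theorem MExt.of_mExt_product {P : U → U → Prop} (htrans : ∀ x y z, P x y → P y z → P x z)
    {x y w z : U} (hw : ∀ u, Ing P u w ↔ (Ing P u x ∧ Ing P u y))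
    (hzx : P z x) (hzw : MExt P z w) : MExt P z y := by
  rintro ⟨v, hvz, hvy⟩
  exact hzw ⟨v, hvz, (hw v).2 ⟨hvz.trans_part htrans hzx, hvy⟩⟩

theorem part_of_product_of_not_ing {P : U → U → Prop} {x y w : U}
    (hw : ∀ u, Ing P u w ↔ (Ing P u x ∧ Ing P u y)) (hxy : ¬ Ing P x y) : P w x := by
  obtain ⟨hwx, hwy⟩ := (hw w).1 (Ing.refl P w)
  refine hwx.resolve_left ?_
  rintro rfl
  exact hxy hwy

theorem stmt_18 (P : U → U → Prop)
    (htrans : ∀ x y z, P x y → P y z → P x z)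
    (hWSP : ∀ x y, P y x → ∃ z, P z x ∧ MExt P z y)
    (hprod : ∀ x y, Ov P x y → ∃ z, ∀ u, (Ing P u z ↔ (Ing P u x ∧ Ing P u y))) :
    ∀ x y, ¬ Ing P x y → ∃ z, Ing P z x ∧ MExt P z y := by
  intro x y hxy
  by_cases hov : Ov P x y
  · obtain ⟨w, hw⟩ := hprod x y hov
    obtain ⟨z, hzx, hzw⟩ := hWSP x w (part_of_product_of_not_ing hw hxy)
    exact ⟨z, Or.inr hzx, MExt.of_mExt_product htrans hw hzx hzw⟩
  · exact ⟨x, Ing.refl P x, hov⟩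
end
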